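/- Let a, b, c be positive integers and let p be a prime with p ≥ a + b + c. Then p does not divide Mac(a, b, c) = H(a)H(b)H(c)H(a+b+c)/(H(a+b)H(a+c)H(b+c)). Equivalently, every prime divisor of Mac(a,b,c) is at most a+b+c-1. -/

import Mathlib

/-!
Write `f_m(n) = ∑_{i<n} ⌊i/m⌋`. By Legendre's formula the exponent of a prime `p` in `H(n)` is
`∑_{j ≥ 1} f_{p^j}(n)`, so `Mac(a,b,c)` is an integer once
`f(a+b) + f(a+c) + f(b+c) ≤ f(a) + f(b) + f(c) + f(a+b+c)` for every `m`. Since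
`f(n + m) = f(n) + n`, the defect of this inequality is `m`-periodic in each of `a, b, c`, and for
`a, b, c < m` it follows from `f(n) = (n - m)⁺ + (n - 2m)⁺` on `n < 3m`.
With integrality, `p ∣ Mac(a,b,c)` forces `p` to divide some `i!` with `i < a + b + c ≤ p`.
-/

/-- The hyperfactorial `H(n) = ∏_{i=0}^{n-1} i!`. -/
def hyperfac (n : ℕ) : ℕ := ∏ i ∈ Finset.range n, Nat.factorial i

/-- MacMahon's number `Mac(a,b,c)`. -/
def mac (a b c : ℕ) : ℕ :=
  hyperfac a * hyperfac b * hyperfac c * hyperfac (a + b + c) /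
    (hyperfac (a + b) * hyperfac (a + c) * hyperfac (b + c))

open Finset

def floorSum (m n : ℕ) : ℕ := ∑ i ∈ range n, i / m

lemma sum_range_add_div_self {m : ℕ} (hm : 0 < m) (n : ℕ) :
    ∑ i ∈ range m, (n + i) / m = n := by
  induction n with
  | zero => simpa using fun i hi => Nat.div_eq_of_lt (mem_range.mp hi)
  | succ n ih =>
    obtain ⟨k, rfl⟩ := Nat.exists_eq_add_one_of_ne_zero hm.ne'
    have h := sum_range_succ (fun i => (n + i) / (k + 1)) (k + 1)
    rw [sum_range_succ', ih, Nat.add_div_right n hm] at h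
    simp only [add_zero, add_assoc, add_comm 1] at h ⊢
    omega

lemma floorSum_add_self {m : ℕ} (hm : 0 < m) (n : ℕ) :
    floorSum m (n + m) = floorSum m n + n := by
  rw [floorSum, sum_range_add, sum_range_add_div_self hm, floorSum]

lemma floorSum_of_le {m n : ℕ} (h : n ≤ m) : floorSum m n = 0 :=
  sum_eq_zero fun _ hi => Nat.div_eq_of_lt ((mem_range.mp hi).trans_le h)

lemma floorSum_of_lt_three_mul {m n : ℕ} (h : n < 3 * m) :
    floorSum m n = (n - m) + (n - 2 * m) := by
  have hm : 0 < m := by omega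
  rcases le_or_gt n m with h1 | h1
  · rw [floorSum_of_le h1]; omega
  obtain ⟨n, rfl⟩ : ∃ k, n = k + m := ⟨n - m, by omega⟩
  rw [floorSum_add_self hm]
  rcases le_or_gt n m with h2 | h2
  · rw [floorSum_of_le h2]; omega
  obtain ⟨n, rfl⟩ : ∃ k, n = k + m := ⟨n - m, by omega⟩
  rw [floorSum_add_self hm, floorSum_of_le (by omega)]; omega

def floorSumDefect (m a b c : ℕ) : ℤ :=
  floorSum m a + floorSum m b + floorSum m c + floorSum m (a + b + c)
    - floorSum m (a + b) - floorSum m (a + c) - floorSum m (b + c)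

lemma floorSumDefect_rotate (m a b c : ℕ) :
    floorSumDefect m a b c = floorSumDefect m b c a := by
  rw [floorSumDefect, floorSumDefect, show b + c + a = a + b + c by ring, add_comm b a,
    add_comm c a]
  ring

lemma floorSumDefect_add_self {m : ℕ} (hm : 0 < m) (a b c : ℕ) :
    floorSumDefect m (a + m) b c = floorSumDefect m a b c := by
  simp only [floorSumDefect, add_right_comm _ m, floorSum_add_self hm]
  push_cast
  ring

lemma floorSumDefect_mod {m : ℕ} (hm : 0 < m) (a b c : ℕ) :
    floorSumDefect m a b c = floorSumDefect m (a % m) b c := by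
  conv_lhs => rw [← Nat.mod_add_div' a m]
  induction a / m with
  | zero => simp
  | succ k ih => rw [add_mul, one_mul, ← add_assoc, floorSumDefect_add_self hm, ih]

lemma floorSumDefect_nonneg_of_lt {m a b c : ℕ} (ha : a < m) (hb : b < m) (hc : c < m) :
    0 ≤ floorSumDefect m a b c := by
  simp only [floorSumDefect, floorSum_of_le ha.le, floorSum_of_le hb.le, floorSum_of_le hc.le]
  rw [floorSum_of_lt_three_mul (n := a + b + c) (by omega),
    floorSum_of_lt_three_mul (n := a + b) (by omega),
    floorSum_of_lt_three_mul (n := a + c) (by omega),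
    floorSum_of_lt_three_mul (n := b + c) (by omega)]
  omega

lemma floorSumDefect_nonneg (m a b c : ℕ) : 0 ≤ floorSumDefect m a b c := by
  rcases Nat.eq_zero_or_pos m with rfl | hm
  · simp [floorSumDefect, floorSum]
  rw [floorSumDefect_mod hm, floorSumDefect_rotate, floorSumDefect_mod hm, floorSumDefect_rotate,
    floorSumDefect_mod hm, floorSumDefect_rotate]
  exact floorSumDefect_nonneg_of_lt (Nat.mod_lt _ hm) (Nat.mod_lt _ hm) (Nat.mod_lt _ hm)

lemma floorSum_add_le (m a b c : ℕ) :
    floorSum m (a + b) + floorSum m (a + c) + floorSum m (b + c) ≤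
      floorSum m a + floorSum m b + floorSum m c + floorSum m (a + b + c) := by
  have h := floorSumDefect_nonneg m a b c
  rw [floorSumDefect] at h
  omega

lemma hyperfac_ne_zero (n : ℕ) : hyperfac n ≠ 0 :=
  prod_ne_zero_iff.mpr fun i _ => i.factorial_ne_zero

lemma factorization_hyperfac {p n B : ℕ} (hp : p.Prime) (hnB : n ≤ B) :
    (hyperfac n).factorization p = ∑ j ∈ Ico 1 B, floorSum (p ^ j) n := by
  rw [hyperfac, Nat.factorization_prod fun i _ => i.factorial_ne_zero, sum_apply']
  simp only [floorSum]
  rw [sum_comm]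
  refine sum_congr rfl fun i hi => Nat.factorization_factorial hp ?_
  exact (Nat.log_le_self p i).trans_lt ((mem_range.mp hi).trans_le hnB)

lemma hyperfac_mul_dvd (a b c : ℕ) :
    hyperfac (a + b) * hyperfac (a + c) * hyperfac (b + c) ∣
      hyperfac a * hyperfac b * hyperfac c * hyperfac (a + b + c) := by
  rw [← Nat.factorization_prime_le_iff_dvd (by simp [hyperfac_ne_zero])
    (by simp [hyperfac_ne_zero])]
  intro p hp
  simp only [Nat.factorization_mul, ne_eq, mul_eq_zero, hyperfac_ne_zero, or_self,
    not_false_eq_true, Finsupp.coe_add, Pi.add_apply]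
  simp (disch := omega) only [factorization_hyperfac (B := a + b + c) hp, ← sum_add_distrib]
  exact sum_le_sum fun j _ => floorSum_add_le (p ^ j) a b c

lemma not_dvd_hyperfac {p n : ℕ} (hp : p.Prime) (hn : n ≤ p) : ¬ p ∣ hyperfac n := by
  simp only [hyperfac, Prime.dvd_finsetProd_iff hp.prime, hp.dvd_factorial, mem_range,
    not_exists, not_and]
  omega

theorem mac_prime_divisors_lt_general (a b c p : ℕ)
    (hp : p.Prime) (hge : a + b + c ≤ p) : ¬ p ∣ mac a b c := by
  intro hdvd
  have hnum := hdvd.trans (Nat.div_dvd_of_dvd (hyperfac_mul_dvd a b c))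
  have hfac (n : ℕ) (hn : n ≤ a + b + c) : ¬ p ∣ hyperfac n :=
    not_dvd_hyperfac hp (hn.trans hge)
  simp (disch := omega) only [hp.prime.dvd_mul, hfac, or_self] at hnum

/-- If `a, b, c` are positive and `p` is a prime with `p ≥ a + b + c`,
then `p` does not divide `Mac(a,b,c)`. -/
theorem mac_prime_divisors_lt (a b c p : ℕ) (ha : 0 < a) (hb : 0 < b) (hc : 0 < c)
    (hp : p.Prime) (hge : a + b + c ≤ p) : ¬ p ∣ mac a b c :=
  mac_prime_divisors_lt_general a b c p hp hge
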